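/- In the SIS model, assuming x ≥ 0 componentwise, all A_{ij} ≥ 0, e_i ≤ 1, and max_i(1 - e_i + Σ_j A_{ji}) = r < 1, then Σ_i F_i(x) ≤ r·Σ_i x_i; consequently the total infection Σ_i x_i[t] decays geometrically to 0. -/
import Mathlib


theorem sis_total_infection_decays (N : ℕ) (hN : 1 ≤ N)
    (e : Fin N → ℝ) (he : ∀ i, 0 ≤ e i ∧ e i ≤ 1)
    (A : Matrix (Fin N) (Fin N) ℝ) (hA : ∀ i j, 0 ≤ A i j)
    (F : (Fin N → ℝ) → Fin N → ℝ)
    (hF : ∀ x i, F x i = (1 - e i) * x i + (1 - x i) * ∑ j, A i j * x j)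
    (r : ℝ) (hr : ∀ i, 1 - e i + ∑ j, A j i ≤ r) (hr1 : r < 1) :
    (∀ x : Fin N → ℝ, (∀ i, 0 ≤ x i) → ∑ i, F x i ≤ r * ∑ i, x i) ∧
    (∀ x : ℕ → Fin N → ℝ, (∀ t, x (t + 1) = F (x t)) →
      (∀ t i, 0 ≤ x t i ∧ x t i ≤ 1) →
      ∀ t, ∑ i, x t i ≤ r ^ t * ∑ i, x 0 i) := by
  have hr0 : 0 ≤ r := by
    obtain ⟨i⟩ := Fin.pos_iff_nonempty.mp hN
    have := hr i
    have h1 : (0:ℝ) ≤ 1 - e i := by linarith [(he i).2]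
    have h2 : (0:ℝ) ≤ ∑ j, A j i := Finset.sum_nonneg fun j _ => hA j i
    linarith
  have key : ∀ x : Fin N → ℝ, (∀ i, 0 ≤ x i) → ∑ i, F x i ≤ r * ∑ i, x i := by
    intro x hx
    have step1 : ∑ i, F x i ≤ ∑ i, ((1 - e i) * x i + ∑ j, A i j * x j) := by
      apply Finset.sum_le_sum
      intro i _
      rw [hF]
      have hs : 0 ≤ ∑ j, A i j * x j :=
        Finset.sum_nonneg fun j _ => mul_nonneg (hA i j) (hx j)
      nlinarith [mul_nonneg (hx i) hs]
    have step2 : ∑ i, ((1 - e i) * x i + ∑ j, A i j * x j)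
        = ∑ i, (1 - e i + ∑ j, A j i) * x i := by
      simp only [add_mul, Finset.sum_add_distrib, Finset.sum_mul]
      congr 1
      rw [Finset.sum_comm]
    have step3 : ∑ i, (1 - e i + ∑ j, A j i) * x i ≤ ∑ i, r * x i := by
      apply Finset.sum_le_sum
      intro i _
      exact mul_le_mul_of_nonneg_right (hr i) (hx i)
    rw [Finset.mul_sum]
    linarith
  refine ⟨key, ?_⟩
  intro x hstep hbound t
  induction t with
  | zero => simp
  | succ t ih =>
    have h1 : ∑ i, x (t + 1) i ≤ r * ∑ i, x t i := by
      rw [hstep t]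
      exact key (x t) fun i => (hbound t i).1
    calc ∑ i, x (t + 1) i ≤ r * ∑ i, x t i := h1
      _ ≤ r * (r ^ t * ∑ i, x 0 i) := mul_le_mul_of_nonneg_left ih hr0
      _ = r ^ (t + 1) * ∑ i, x 0 i := by ring
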